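/- The unraveling U(M) of a generalized epistemic model has standard group knowledge: if h ∼^u_U h' and h ∼^u_{U'} h', then h ∼^u_{U∪U'} h'. Consequently, ∼^u_V = ⋂_{a∈V} ∼^u_{{a}} fornonempty V. -/

import Mathlib

/-- Formulas of epistemic logic with distributed knowledge:
atomic propositions, falsum, implication, and `D U φ` for groups `U` of agents. -/
inductive Fml (A : Type) : Type
  | atom : ℕ → Fml A
  | fls : Fml A
  | imp : Fml A → Fml A → Fml A
  | D : Finset A → Fml A → Fml A

namespace Fml
variable {A : Type}
/-- Negation. -/
def neg (φ : Fml A) : Fml A := imp φ fls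
/-- Truth. -/
def tru : Fml A := neg (fls (A := A))
/-- Conjunction. -/
def and (φ ψ : Fml A) : Fml A := neg (imp φ (neg ψ))
/-- `alive U := ¬ D_U ¬⊤`. -/
def alive (U : Finset A) : Fml A := neg (D U (neg tru))
/-- `dead a := K_a ⊥`. -/
def dead (a : A) : Fml A := D {a} fls
end Fml

/-- Propositional tautologies: formulas true under every valuation that
interprets `imp` and `fls` classically (atoms and `D`-formulas arbitrary). -/
def Taut {A : Type} (φ : Fml A) : Prop :=
  ∀ v : Fml A → Prop,
    (∀ ψ χ : Fml A, v (Fml.imp ψ χ) ↔ (v ψ → v χ)) → ¬ v Fml.fls → v φ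

/-- A generalized epistemic model: worlds, a PER `rel U` for each group `U`,
monotone in `U`, closed under union of alive groups, and a valuation. -/
structure GEM (A : Type) [DecidableEq A] where
  W : Type
  rel : Finset A → W → W → Prop
  symm : ∀ U w w', rel U w w' → rel U w' w
  trans : ∀ U w₁ w₂ w₃, rel U w₁ w₂ → rel U w₂ w₃ → rel U w₁ w₃
  mono : ∀ (U U' : Finset A), U ⊆ U' → ∀ w w', rel U' w w' → rel U w w'
  union : ∀ (U U' : Finset A) w, rel U w w → rel U' w w → rel (U ∪ U') w w
  val : W → ℕ → Prop

/-- The satisfaction relation `M, w ⊨ φ`. -/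
def Sat {A : Type} [DecidableEq A] (M : GEM A) : M.W → Fml A → Prop
  | w, Fml.atom p => M.val w p
  | _, Fml.fls => False
  | w, Fml.imp φ ψ => Sat M w φ → Sat M w ψ
  | w, Fml.D U φ => ∀ w', M.rel U w w' → Sat M w' φ

variable {A : Type} [DecidableEq A]

/-- Raw histories over a model `M`: a starting world followed by steps `(U, w)`. -/
inductive Hist (M : GEM A) : Type
  | base : M.W → Hist M
  | step : Hist M → Finset A → M.W → Hist M

/-- The last world of a history. -/
def lastW {M : GEM A} : Hist M → M.W
  | .base w => w
  | .step _ _ w => w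

/-- A history `(w₀, U₁, w₁, …, U_k, w_k)` is valid when each `w_{i-1} ∼_{U_i} w_i`
and each `U_i` is maximal (w.r.t. inclusion) among groups relating `w_{i-1}` and `w_i`. -/
def validH {M : GEM A} : Hist M → Prop
  | .base _ => True
  | .step h U w => validH h ∧ M.rel U (lastW h) w ∧
      ∀ V : Finset A, U ⊆ V → M.rel V (lastW h) w → V = U

/-- Valid histories: the worlds of the unraveling. -/
def HistV (M : GEM A) : Type := {h : Hist M // validH h}

/-- `h →_U h'` iff `h'` extends `h` by one step `(U', w)` with `U ⊆ U'`. -/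
def stepRel (M : GEM A) (U : Finset A) (h h' : HistV M) : Prop :=
  ∃ (U' : Finset A) (w : M.W), U ⊆ U' ∧ h'.1 = Hist.step h.1 U' w

/-- `∼^u_U`: the symmetric-transitive closure of `→_U`. -/
def uSim (M : GEM A) (U : Finset A) : HistV M → HistV M → Prop :=
  Relation.TransGen fun x y => stepRel M U x y ∨ stepRel M U y x


/-! In the unraveling, `→_∅` is the parent-to-child relation of a forest and every `→_U` is
a subrelation of it. Hence a `∼^u_U`-path between two histories can be straightened to the
two `→_U`-paths descending from a common ancestor; two common ancestors lie on the same branch,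
so both groups' paths can be taken from the deeper one, where labels containing `U` and `U'`
contain `U ∪ U'`. A history related to itself needs a separate argument: the model's union
axiom makes its last world `U ∪ U'`-alive, and finiteness of the agent set yields a child
along a maximal group. -/

namespace Relation

variable {α : Type*} {r r₁ r₂ s : α → α → Prop} {a b p q : α}

def IsForest (s : α → α → Prop) : Prop :=
  Relator.LeftUnique s ∧ ∀ a, ¬ TransGen s a a

theorem _root_.Relator.LeftUnique.of_le (hs : Relator.LeftUnique s) (hrs : r ≤ s) :
    Relator.LeftUnique r :=
  fun _ _ _ hac hbc => hs (hrs _ _ hac) (hrs _ _ hbc)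

theorem IsForest.eq_of_reflTransGen (hs : IsForest s) (hab : ReflTransGen s a b)
    (hba : ReflTransGen s b a) : a = b := by
  rcases reflTransGen_iff_eq_or_transGen.1 hab with rfl | hab
  · rfl
  rcases reflTransGen_iff_eq_or_transGen.1 hba with rfl | hba
  · rfl
  exact (hs.2 a (hab.trans hba)).elim

theorem ReflTransGen.exists_common_ancestor (hr : Relator.LeftUnique r)
    (hab : ReflTransGen (SymmGen r) a b) : ∃ p, ReflTransGen r p a ∧ ReflTransGen r p b := by
  induction hab with
  | refl => exact ⟨a, .refl, .refl⟩
  | @tail b c _ hbc ih =>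
    obtain ⟨p, hpa, hpb⟩ := ih
    rcases hbc with hbc | hcb
    · exact ⟨p, hpa, hpb.tail hbc⟩
    · rcases hpb.cases_tail with rfl | ⟨d, hpd, hdb⟩
      · exact ⟨c, hpa.head hcb, .refl⟩
      · exact ⟨p, hpa, hr hdb hcb ▸ hpd⟩

theorem ReflTransGen.symmGen_of_common_ancestor (hpa : ReflTransGen r p a)
    (hpb : ReflTransGen r p b) : ReflTransGen (SymmGen r) a b :=
  (symm (ReflTransGen.mono (fun _ _ => SymmGen.of_rel) _ _ hpa)).trans
    (ReflTransGen.mono (fun _ _ => SymmGen.of_rel) _ _ hpb)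

theorem IsForest.reflTransGen_of_between (hs : IsForest s) (hrs : r ≤ s)
    (hpa : ReflTransGen r p a) (hpq : ReflTransGen s p q) (hqa : ReflTransGen s q a) :
    ReflTransGen r q a := by
  induction hpa with
  | refl => exact hs.eq_of_reflTransGen hqa hpq ▸ .refl
  | @tail b c _ hbc ih =>
    rcases hqa.cases_tail with rfl | ⟨d, hqd, hdc⟩
    · exact .refl
    · exact (ih (hs.1 hdc (hrs _ _ hbc) ▸ hqd)).tail hbc

theorem ReflTransGen.inf_of_leftUnique (hs : Relator.LeftUnique s) (h₁ : r₁ ≤ s) (h₂ : r₂ ≤ s)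
    (hpa₁ : ReflTransGen r₁ p a) (hpa₂ : ReflTransGen r₂ p a) : ReflTransGen (r₁ ⊓ r₂) p a := by
  induction hpa₁ with
  | refl => exact .refl
  | @tail b c _ hbc ih =>
    rcases hpa₂.cases_tail with rfl | ⟨d, hpd, hdc⟩
    · exact .refl
    · have hdb : d = b := hs (h₂ _ _ hdc) (h₁ _ _ hbc)
      subst hdb
      exact (ih hpd).tail ⟨hbc, hdc⟩

theorem IsForest.reflTransGen_symmGen_inf_of_ancestor (hs : IsForest s) (h₁ : r₁ ≤ s)
    (h₂ : r₂ ≤ s) (hpa : ReflTransGen r₁ p a) (hpb : ReflTransGen r₁ p b)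
    (hqa : ReflTransGen r₂ q a) (hqb : ReflTransGen r₂ q b) (hqp : ReflTransGen s q p) :
    ReflTransGen (SymmGen (r₁ ⊓ r₂)) a b :=
  ReflTransGen.symmGen_of_common_ancestor
    (.inf_of_leftUnique hs.1 h₁ h₂ hpa
      (hs.reflTransGen_of_between h₂ hqa hqp (ReflTransGen.mono h₁ _ _ hpa)))
    (.inf_of_leftUnique hs.1 h₁ h₂ hpb
      (hs.reflTransGen_of_between h₂ hqb hqp (ReflTransGen.mono h₁ _ _ hpb)))

theorem IsForest.reflTransGen_symmGen_inf (hs : IsForest s) (h₁ : r₁ ≤ s) (h₂ : r₂ ≤ s)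
    (hab₁ : ReflTransGen (SymmGen r₁) a b) (hab₂ : ReflTransGen (SymmGen r₂) a b) :
    ReflTransGen (SymmGen (r₁ ⊓ r₂)) a b := by
  obtain ⟨p, hpa, hpb⟩ := hab₁.exists_common_ancestor (hs.1.of_le h₁)
  obtain ⟨q, hqa, hqb⟩ := hab₂.exists_common_ancestor (hs.1.of_le h₂)
  rcases ReflTransGen.total_of_right_unique hs.1.flip
    (reflTransGen_swap.2 (ReflTransGen.mono h₁ _ _ hpa))
    (reflTransGen_swap.2 (ReflTransGen.mono h₂ _ _ hqa)) with hqp | hpq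
  · exact hs.reflTransGen_symmGen_inf_of_ancestor h₁ h₂ hpa hpb hqa hqb (reflTransGen_swap.1 hqp)
  · exact inf_comm r₂ r₁ ▸
      hs.reflTransGen_symmGen_inf_of_ancestor h₂ h₁ hqa hqb hpa hpb (reflTransGen_swap.1 hpq)

end Relation

namespace GEM

variable (M : GEM A) {U : Finset A} {w w' : M.W}

theorem rel_self_left (hw : M.rel U w w') : M.rel U w w :=
  M.trans _ _ _ _ hw (M.symm _ _ _ hw)

theorem rel_self_right (hw : M.rel U w w') : M.rel U w' w' :=
  M.rel_self_left (M.symm _ _ _ hw)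

end GEM

section Unraveling

open Relation

variable {M : GEM A} {U U' V : Finset A} {h h' : HistV M} {w : M.W}

def Hist.length : Hist M → ℕ
  | .base _ => 0
  | .step h _ _ => h.length + 1

theorem stepRel.length_eq (hs : stepRel M U h h') : h'.1.length = h.1.length + 1 := by
  obtain ⟨_, _, _, he⟩ := hs
  rw [he, Hist.length]

theorem stepRel_anti (hUV : U ⊆ V) : stepRel M V ≤ stepRel M U :=
  fun _ _ ⟨L, w, hVL, he⟩ => ⟨L, w, hUV.trans hVL, he⟩

theorem stepRel_union : stepRel M (U ∪ U') = stepRel M U ⊓ stepRel M U' := by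
  ext x y
  constructor
  · intro hxy
    exact ⟨stepRel_anti Finset.subset_union_left _ _ hxy,
      stepRel_anti Finset.subset_union_right _ _ hxy⟩
  · rintro ⟨⟨L, w, hUL, he⟩, ⟨L', w', hUL', he'⟩⟩
    obtain ⟨-, rfl, -⟩ := Hist.step.inj (he.symm.trans he')
    exact ⟨L, w, Finset.union_subset hUL hUL', he⟩

theorem length_lt_of_transGen_stepRel (hs : TransGen (stepRel M U) h h') :
    h.1.length < h'.1.length := by
  induction hs with
  | single hs => rw [hs.length_eq]; omega
  | tail _ hs ih => rw [hs.length_eq]; omega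

theorem isForest_stepRel : IsForest (stepRel M U) := by
  refine ⟨fun x y z ⟨_, _, _, hxz⟩ ⟨_, _, _, hyz⟩ => ?_, fun x hx => ?_⟩
  · exact Subtype.ext (Hist.step.inj (hxz.symm.trans hyz)).1
  · exact lt_irrefl _ (length_lt_of_transGen_stepRel hx)

theorem uSim_eq_transGen : uSim M U = TransGen (SymmGen (stepRel M U)) := rfl

theorem uSim_anti (hUV : U ⊆ V) (hs : uSim M V h h') : uSim M U h h' :=
  TransGen.mono (fun _ _ hxy => hxy.imp (stepRel_anti hUV _ _) (stepRel_anti hUV _ _)) _ _ hs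

theorem rel_self_of_uSim (hs : uSim M U h h') : M.rel U (lastW h.1) (lastW h.1) := by
  obtain ⟨c, ⟨L, w, hUL, he⟩ | ⟨L, w, hUL, he⟩, -⟩ := TransGen.head'_iff.1 hs
  · have hc : validH (Hist.step h.1 L w) := he ▸ c.2
    exact M.mono _ _ hUL _ _ (M.rel_self_left hc.2.1)
  · have hh : validH (Hist.step c.1 L w) := he ▸ h.2
    rw [he]
    exact M.mono _ _ hUL _ _ (M.rel_self_right hh.2.1)

variable [Fintype A]

theorem exists_stepRel_of_rel (hw : M.rel U (lastW h.1) w) : ∃ c, stepRel M U h c := by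
  obtain ⟨L, hUL, hmax⟩ :=
    Finite.exists_le_maximal (p := fun L => U ⊆ L ∧ M.rel L (lastW h.1) w) ⟨subset_rfl, hw⟩
  refine ⟨⟨.step h.1 L w, h.2, hmax.prop.2, fun V hLV hV => ?_⟩, L, w, hUL, rfl⟩
  exact le_antisymm (hmax.2 ⟨hUL.trans hLV, hV⟩ hLV) hLV

theorem uSim_self_of_rel (hw : M.rel U (lastW h.1) (lastW h.1)) : uSim M U h h := by
  obtain ⟨c, hc⟩ := exists_stepRel_of_rel hw
  exact (TransGen.single (SymmGen.of_rel hc)).tail (SymmGen.of_rel_symm hc)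

theorem uSim_union (hU : uSim M U h h') (hU' : uSim M U' h h') : uSim M (U ∪ U') h h' := by
  rcases eq_or_ne h h' with rfl | hne
  · exact uSim_self_of_rel (M.union U U' _ (rel_self_of_uSim hU) (rel_self_of_uSim hU'))
  rw [uSim_eq_transGen, stepRel_union]
  refine (reflTransGen_iff_eq_or_transGen.1 ?_).resolve_left hne.symm
  exact isForest_stepRel.reflTransGen_symmGen_inf (stepRel_anti (Finset.empty_subset U))
    (stepRel_anti (Finset.empty_subset U')) hU.to_reflTransGen hU'.to_reflTransGen

theorem uSim_iff_forall_singleton (hV : V.Nonempty) :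
    uSim M V h h' ↔ ∀ a ∈ V, uSim M {a} h h' := by
  refine ⟨fun hs a ha => uSim_anti (Finset.singleton_subset_iff.2 ha) hs, ?_⟩
  induction hV using Finset.Nonempty.cons_induction with
  | singleton a => exact fun hall => hall a (Finset.mem_singleton_self a)
  | cons a s ha _ ih =>
    intro hall
    rw [Finset.cons_eq_insert, Finset.insert_eq]
    exact uSim_union (hall a (Finset.mem_cons_self a s))
      (ih fun b hb => hall b (Finset.mem_cons_of_mem hb))

end Unraveling

/-- The unraveling has standard group knowledge: `h ∼^u_U h'` and `h ∼^u_{U'} h'`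
imply `h ∼^u_{U∪U'} h'`; consequently `∼^u_V = ⋂_{a∈V} ∼^u_{{a}}` for nonempty `V`. -/
theorem stmt18 {A : Type} [DecidableEq A] [Fintype A] (M : GEM A) :
    (∀ (U U' : Finset A) (h h' : HistV M),
      uSim M U h h' → uSim M U' h h' → uSim M (U ∪ U') h h') ∧
    (∀ V : Finset A, V.Nonempty → ∀ h h' : HistV M,
      uSim M V h h' ↔ ∀ a ∈ V, uSim M {a} h h') :=
  ⟨fun _ _ _ _ => uSim_union, fun _ hV _ _ => uSim_iff_forall_singleton hV⟩
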